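/- Let L ∈ ℕ and let u(n) = 2^(L·2^n). Then D⟨∌*, u, L⟩ ≥_W IOE(n ↦ 2^(2^n)) (Muchnik reducibility) and B⟨∌*, u, L⟩ ≤_S AED(n ↦ 2^(2^n)) (Medvedev reducibility). -/

import Mathlib

open Filter

namespace Paper

/-! ### Oracle computability -/

/-- Codes for oracle Turing functionals (partial recursive operators with one
function oracle), following the pattern of `Nat.Partrec.Code`. -/
inductive OracleCode : Type
  | zero
  | succ
  | left
  | right
  | oracle
  | pair : OracleCode → OracleCode → OracleCode
  | comp : OracleCode → OracleCode → OracleCode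
  | prec : OracleCode → OracleCode → OracleCode
  | rfind' : OracleCode → OracleCode

/-- Evaluation of an oracle code with oracle `g : ℕ → ℕ`. -/
def OracleCode.eval (g : ℕ → ℕ) : OracleCode → ℕ →. ℕ
  | .zero => pure 0
  | .succ => Nat.succ
  | .left => ↑fun n : ℕ => n.unpair.1
  | .right => ↑fun n : ℕ => n.unpair.2
  | .oracle => ↑fun n : ℕ => g n
  | .pair cf cg => fun n => Nat.pair <$> eval g cf n <*> eval g cg n
  | .comp cf cg => fun n => eval g cg n >>= eval g cf
  | .prec cf cg =>
    Nat.unpaired fun a n =>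
      n.rec (eval g cf a) fun y IH => do
        let i ← IH
        eval g cg (Nat.pair a (Nat.pair y i))
  | .rfind' cf =>
    Nat.unpaired fun a m =>
      (Nat.rfind fun n => (fun m => m = 0) <$> eval g cf (Nat.pair a (n + m))).map (· + m)

/-- Turing reducibility: `f ≤_T g` iff some oracle functional with oracle `g`
computes `f` (totally). -/
def TuringLE (f g : ℕ → ℕ) : Prop :=
  ∃ c : OracleCode, ∀ n, OracleCode.eval g c n = Part.some (f n)

/-- Turing equivalence. -/
def TuringEquiv (f g : ℕ → ℕ) : Prop := TuringLE f g ∧ TuringLE g f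

/-- A mass problem is a set of functions `ℕ → ℕ`. -/
abbrev MassProblem := Set (ℕ → ℕ)

/-- Muchnik (weak) reducibility `B ≤_W C`. -/
def MuchnikLE (B C : MassProblem) : Prop := ∀ g ∈ C, ∃ f ∈ B, TuringLE f g

/-- Muchnik equivalence. -/
def MuchnikEquiv (B C : MassProblem) : Prop := MuchnikLE B C ∧ MuchnikLE C B

/-- Medvedev (strong) reducibility `B ≤_S C`: a single Turing functional is
defined on all of `C` and maps each member of `C` to a member of `B`. -/
def MedvedevLE (B C : MassProblem) : Prop :=
  ∃ c : OracleCode, ∀ g ∈ C, ∃ f ∈ B, ∀ n, OracleCode.eval g c n = Part.some (f n)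

/-- Medvedev equivalence. -/
def MedvedevEquiv (B C : MassProblem) : Prop := MedvedevLE B C ∧ MedvedevLE C B

/-! ### Density notions -/

/-- Lower (asymptotic) density of a set of naturals. -/
noncomputable def lowerDensity (z : Set ℕ) : ℝ :=
  Filter.liminf (fun n => (Nat.card ↥(z ∩ Set.Iio n) : ℝ) / n) Filter.atTop

/-- `x ↔ y`: the agreement set of two functions. -/
def agree (x y : ℕ → ℕ) : Set ℕ := {n | x n = y n}

/-- A bit sequence is a `{0,1}`-valued function. -/
def IsBitSeq (x : ℕ → ℕ) : Prop := ∀ n, x n < 2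

/-- The mass problem `D(p)`. -/
def probD (p : ℝ) : MassProblem :=
  {y | IsBitSeq y ∧ ∀ x : ℕ → ℕ, IsBitSeq x → Computable x →
    lowerDensity (agree x y) ≤ p}

/-- The mass problem `B(p)`. -/
def probB (p : ℝ) : MassProblem :=
  {y | IsBitSeq y ∧ ∀ x : ℕ → ℕ, IsBitSeq x → Computable x →
    p < lowerDensity (agree x y)}

/-- The mass problem `IOE(h)`. -/
def IOE (h : ℕ → ℕ) : MassProblem :=
  {f | ∀ x : ℕ → ℕ, Computable x → (∀ n, x n < h n) → ∃ᶠ n in atTop, f n = x n}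

/-- The mass problem `AED(h)`. -/
def AED (h : ℕ → ℕ) : MassProblem :=
  {f | (∀ n, f n < h n) ∧ ∀ x : ℕ → ℕ, Computable x → ∀ᶠ n in atTop, f n ≠ x n}

/-! ### Hamming distance and the problems `D⟨≠*,ĥ,q⟩`, `B⟨≠*,ĥ,q⟩` -/

/-- Normalized Hamming distance between `a` and `b`, viewed as binary strings
of length `r` (via binary expansion with leading zeros). -/
noncomputable def nhd (r a b : ℕ) : ℝ :=
  (((Finset.range r).filter fun i => a.testBit i ≠ b.testBit i).card : ℝ) / r

/-- The mass problem `D⟨≠*, ĥ, q⟩`. -/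
def probDneq (hh : ℕ → ℕ) (q : ℝ) : MassProblem :=
  {y | (∀ n, y n < 2 ^ hh n) ∧ ∀ x : ℕ → ℕ, Computable x → (∀ n, x n < 2 ^ hh n) →
    ∃ᶠ n in atTop, nhd (hh n) (x n) (y n) < q}

/-- The mass problem `B⟨≠*, ĥ, q⟩`. -/
def probBneq (hh : ℕ → ℕ) (q : ℝ) : MassProblem :=
  {y | (∀ n, y n < 2 ^ hh n) ∧ ∀ x : ℕ → ℕ, Computable x → (∀ n, x n < 2 ^ hh n) →
    ∀ᶠ n in atTop, q ≤ nhd (hh n) (x n) (y n)}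

/-! ### Slaloms, coded as functions `ℕ → ℕ` via binary digits -/

/-- `s : ℕ → ℕ`, coding finite sets via binary digits (`i ∈ s(n)` iff the
`i`-th bit of `s n` is set), is an `L`-slalom bounded by `u`. -/
def IsSlalomCode (u : ℕ → ℕ) (L : ℕ) (s : ℕ → ℕ) : Prop :=
  ∀ n, (∀ i, (s n).testBit i = true → i < u n) ∧
    ((Finset.range (u n)).filter fun i => (s n).testBit i = true).card ≤ L

/-- The mass problem `D⟨∌*, u, L⟩`. -/
def probDSlalom (u : ℕ → ℕ) (L : ℕ) : MassProblem :=
  {s | IsSlalomCode u L s ∧ ∀ y : ℕ → ℕ, Computable y → (∀ n, y n < u n) →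
    ∃ᶠ n in atTop, (s n).testBit (y n) = true}

/-- The mass problem `B⟨∌*, u, L⟩`. -/
def probBSlalom (u : ℕ → ℕ) (L : ℕ) : MassProblem :=
  {y | (∀ n, y n < u n) ∧ ∀ s : ℕ → ℕ, Computable s → IsSlalomCode u L s →
    ∀ᶠ n in atTop, (s n).testBit (y n) = false}

/-! ### Gamma and Delta values -/

/-- `γ(A)`. -/
noncomputable def gammaVal (A : ℕ → ℕ) : ℝ :=
  sSup ((fun x => lowerDensity (agree A x)) '' {x | IsBitSeq x ∧ Computable x})

/-- `Γ(A)`. -/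
noncomputable def GammaVal (A : ℕ → ℕ) : ℝ :=
  sInf (gammaVal '' {Y | IsBitSeq Y ∧ TuringEquiv Y A})

/-- `δ(A)`. -/
noncomputable def deltaVal (A : ℕ → ℕ) : ℝ :=
  sInf ((fun x => lowerDensity (agree A x)) '' {x | IsBitSeq x ∧ Computable x})

/-- `Δ(A)`. -/
noncomputable def DeltaVal (A : ℕ → ℕ) : ℝ :=
  sSup (deltaVal '' {Y | IsBitSeq Y ∧ TuringLE Y A})

/-! ### Cardinal characteristics -/

/-- The cardinal characteristic `𝔡(p)`. -/
noncomputable def dChar (p : ℝ) : Cardinal :=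
  sInf {c : Cardinal | ∃ G : Set (ℕ → ℕ), c = Cardinal.mk G ∧ (∀ y ∈ G, IsBitSeq y) ∧
    ∀ x : ℕ → ℕ, IsBitSeq x → ∃ y ∈ G, p < lowerDensity (agree x y)}

/-- The cardinal characteristic `𝔟(p)`. -/
noncomputable def bChar (p : ℝ) : Cardinal :=
  sInf {c : Cardinal | ∃ F : Set (ℕ → ℕ), c = Cardinal.mk F ∧ (∀ x ∈ F, IsBitSeq x) ∧
    ∀ y : ℕ → ℕ, IsBitSeq y → ∃ x ∈ F, lowerDensity (agree x y) ≤ p}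

/-- The cardinal characteristic `𝔡(≠*, h)`. -/
noncomputable def dNeq (h : ℕ → ℕ) : Cardinal :=
  sInf {c : Cardinal | ∃ G : Set (ℕ → ℕ), c = Cardinal.mk G ∧ (∀ y ∈ G, ∀ n, y n < h n) ∧
    ∀ x : ℕ → ℕ, ∃ y ∈ G, ∀ᶠ n in atTop, x n ≠ y n}

/-- The cardinal characteristic `𝔟(≠*, h)`. -/
noncomputable def bNeq (h : ℕ → ℕ) : Cardinal :=
  sInf {c : Cardinal | ∃ F : Set (ℕ → ℕ), c = Cardinal.mk F ∧
    ∀ y : ℕ → ℕ, (∀ n, y n < h n) → ∃ x ∈ F, ∃ᶠ n in atTop, x n = y n}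

/-- The cardinal characteristic `𝔡⟨≠*, ĥ, q⟩`. -/
noncomputable def dHam (hh : ℕ → ℕ) (q : ℝ) : Cardinal :=
  sInf {c : Cardinal | ∃ G : Set (ℕ → ℕ), c = Cardinal.mk G ∧
    (∀ y ∈ G, ∀ n, y n < 2 ^ hh n) ∧
    ∀ x : ℕ → ℕ, (∀ n, x n < 2 ^ hh n) →
      ∃ y ∈ G, ∀ᶠ n in atTop, q ≤ nhd (hh n) (x n) (y n)}

/-- The cardinal characteristic `𝔟⟨≠*, ĥ, q⟩`. -/
noncomputable def bHam (hh : ℕ → ℕ) (q : ℝ) : Cardinal :=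
  sInf {c : Cardinal | ∃ F : Set (ℕ → ℕ), c = Cardinal.mk F ∧
    (∀ x ∈ F, ∀ n, x n < 2 ^ hh n) ∧
    ∀ y : ℕ → ℕ, (∀ n, y n < 2 ^ hh n) →
      ∃ x ∈ F, ∃ᶠ n in atTop, nhd (hh n) (x n) (y n) < q}

/-- `s : ℕ → Finset ℕ` is an `L`-slalom bounded by `u`. -/
def IsSlalom (u : ℕ → ℕ) (L : ℕ) (s : ℕ → Finset ℕ) : Prop :=
  ∀ n, (∀ i ∈ s n, i < u n) ∧ (s n).card ≤ L

/-- The cardinal characteristic `𝔡⟨∌*, u, L⟩`. -/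
noncomputable def dSlalom (u : ℕ → ℕ) (L : ℕ) : Cardinal :=
  sInf {c : Cardinal | ∃ G : Set (ℕ → ℕ), c = Cardinal.mk G ∧ (∀ y ∈ G, ∀ n, y n < u n) ∧
    ∀ s : ℕ → Finset ℕ, IsSlalom u L s → ∃ y ∈ G, ∀ᶠ n in atTop, y n ∉ s n}

/-- The cardinal characteristic `𝔟⟨∌*, u, L⟩`. -/
noncomputable def bSlalom (u : ℕ → ℕ) (L : ℕ) : Cardinal :=
  sInf {c : Cardinal | ∃ F : Set (ℕ → Finset ℕ), c = Cardinal.mk F ∧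
    (∀ s ∈ F, IsSlalom u L s) ∧
    ∀ y : ℕ → ℕ, (∀ n, y n < u n) → ∃ s ∈ F, ∃ᶠ n in atTop, y n ∈ s n}

/-! ### Order functions and list decoding -/

/-- An order function: nondecreasing, unbounded and computable. -/
def IsOrderFunc (F : ℕ → ℕ) : Prop :=
  Computable F ∧ Monotone F ∧ ∀ b : ℕ, ∃ n, b < F n

/-- The list-decoding property for parameters `q`, `ε`, `L`: for every length `r`
there is a set `C` of `2^⌊εr⌋` binary strings of length `r` (coded as numbers
below `2^r`) such that every string has at most `L` elements of `C` within
normalized Hamming distance `< q`. -/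
def ListDecoding (q ε : ℝ) (L : ℕ) : Prop :=
  ∀ r : ℕ, ∃ C : Finset ℕ, (∀ a ∈ C, a < 2 ^ r) ∧ C.card = 2 ^ ⌊ε * r⌋₊ ∧
    ∀ σ < 2 ^ r, (C.filter fun τ => nhd r σ τ < q).card ≤ L

/-! Read a number below `h n ^ L` as `L` digits in base `h n`, and let `σ_j n` be the `j`-th
element of the slalom `s n` (at most `L` of them). If no sequence `n ↦ j-th digit of σ_j n`
(`j < L`) were in `IOE h`, computable `z_j < h` would eventually differ from all of them, and the
computable `y` with digits `z_j` would eventually avoid `s`, so `s ∉ D⟨∌*, u, L⟩`. Conversely,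
the `σ_j` of a computable slalom are computable, so an `AED` function eventually avoids them all. -/

theorem primrec_pow : Primrec₂ ((· ^ ·) : ℕ → ℕ → ℕ) :=
  Primrec₂.unpaired'.1 Nat.Primrec.pow

theorem primrec_testBit : Primrec₂ Nat.testBit :=
  ((Primrec.eq.comp (Primrec.nat_mod.comp (Primrec.nat_div.comp Primrec.fst
    (primrec_pow.comp (Primrec.const 2) Primrec.snd)) (Primrec.const 2))
    (Primrec.const 1)).decide).of_eq fun _ => Nat.testBit_eq_decide_div_mod_eq.symm

theorem computable_sum_range {f : ℕ → ℕ → ℕ} :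
    ∀ {k : ℕ}, (∀ j < k, Computable (f j)) → Computable fun n => ∑ j ∈ Finset.range k, f j n
  | 0, _ => by simpa using Computable.const 0
  | k + 1, hf => by
    simp only [Finset.sum_range_succ]
    exact Primrec.nat_add.to_comp.comp (computable_sum_range fun j hj => hf j (by omega))
      (hf k k.lt_succ_self)

def bitList (m : ℕ) : List ℕ := (List.range m).filter fun i => m.testBit i

theorem mem_bitList {m i : ℕ} : i ∈ bitList m ↔ m.testBit i = true := by
  simp only [bitList, List.mem_filter, List.mem_range, and_iff_right_iff_imp]
  exact fun h => (Nat.lt_two_pow_self).trans_le (Nat.ge_two_pow_of_testBit h)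

theorem primrec_bitList : Primrec bitList := by
  have : PrimrecRel fun (i m : ℕ) => m.testBit i = true :=
    Primrec.eq.comp (primrec_testBit.comp Primrec.snd Primrec.fst) (Primrec.const true)
  exact ((PrimrecRel.listFilter this).comp Primrec.list_range Primrec.id).of_eq fun m => by
    simp [bitList]

theorem primrec_getD_bitList (j : ℕ) : Primrec fun m => (bitList m).getD j 0 :=
  (Primrec.list_getD 0).comp primrec_bitList (Primrec.const j)

theorem IsSlalomCode.exists_getD_bitList_eq {u : ℕ → ℕ} {L : ℕ} {s : ℕ → ℕ}
    (hs : IsSlalomCode u L s) {n i : ℕ} (hi : (s n).testBit i = true) :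
    ∃ j < L, (bitList (s n)).getD j 0 = i := by
  have hlen : (bitList (s n)).length ≤ L := by
    calc (bitList (s n)).length = (bitList (s n)).toFinset.card :=
          (List.toFinset_card_of_nodup (List.nodup_range.filter _)).symm
      _ ≤ ((Finset.range (u n)).filter fun i => (s n).testBit i = true).card := by
          refine Finset.card_le_card fun k hk => ?_
          rw [List.mem_toFinset, mem_bitList] at hk
          exact Finset.mem_filter.2 ⟨Finset.mem_range.2 ((hs n).1 k hk), hk⟩
      _ ≤ L := (hs n).2
  obtain ⟨j, hj, hget⟩ := List.mem_iff_getElem.1 (mem_bitList.2 hi)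
  exact ⟨j, hj.trans_le hlen, by rw [List.getD_eq_getElem _ _ hj, hget]⟩

def OracleCode.ofCode : Nat.Partrec.Code → OracleCode
  | .zero => .zero
  | .succ => .succ
  | .left => .left
  | .right => .right
  | .pair cf cg => .pair (ofCode cf) (ofCode cg)
  | .comp cf cg => .comp (ofCode cf) (ofCode cg)
  | .prec cf cg => .prec (ofCode cf) (ofCode cg)
  | .rfind' cf => .rfind' (ofCode cf)

theorem OracleCode.eval_ofCode (g : ℕ → ℕ) (c : Nat.Partrec.Code) :
    (ofCode c).eval g = c.eval := by
  induction c with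
  | zero | succ | left | right => rfl
  | pair cf cg ihf ihg | comp cf cg ihf ihg | prec cf cg ihf ihg =>
    simp only [ofCode, OracleCode.eval, Nat.Partrec.Code.eval, ihf, ihg]; rfl
  | rfind' cf ih => simp only [ofCode, OracleCode.eval, Nat.Partrec.Code.eval, ih]; rfl

theorem exists_oracleCode_eval_eq {F : ℕ → ℕ → ℕ} (hF : Computable₂ F) :
    ∃ c : OracleCode, ∀ g n, c.eval g n = Part.some (F n (g n)) := by
  have hF' : Nat.Partrec fun p => Part.some (F p.unpair.1 p.unpair.2) :=
    Partrec.nat_iff.1 (hF.comp (Computable.fst.comp Computable.unpair)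
      (Computable.snd.comp Computable.unpair)).partrec
  obtain ⟨c, hc⟩ := Nat.Partrec.Code.exists_code.1 hF'
  refine ⟨.comp (.ofCode c) (.pair (.pair .left .right) .oracle), fun g n => ?_⟩
  have hpair : OracleCode.eval g (.pair (.pair .left .right) .oracle) n =
      Part.some (Nat.pair n (g n)) := by
    simp [OracleCode.eval, Seq.seq, Nat.pair_unpair]
  change OracleCode.eval g _ n >>= OracleCode.eval g (.ofCode c) = _
  rw [hpair, OracleCode.eval_ofCode, hc]
  simp

theorem turingLE_of_computable₂ {F : ℕ → ℕ → ℕ} (hF : Computable₂ F) (g : ℕ → ℕ) :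
    TuringLE (fun n => F n (g n)) g :=
  let ⟨c, hc⟩ := exists_oracleCode_eval_eq hF
  ⟨c, hc g⟩

theorem medvedevLE_of_computable_mem {B C : MassProblem} {f : ℕ → ℕ} (hf : Computable f)
    (hfB : f ∈ B) : MedvedevLE B C :=
  let ⟨c, hc⟩ := exists_oracleCode_eval_eq (F := fun n _ => f n) (hf.comp Computable.fst)
  ⟨c, fun g _ => ⟨f, hfB, hc g⟩⟩

theorem medvedevLE_of_subset {B C : MassProblem} (h : C ⊆ B) : MedvedevLE B C :=
  ⟨.oracle, fun g hg => ⟨g, h hg, fun _ => rfl⟩⟩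

theorem sum_range_mul_pow_lt {b : ℕ} {z : ℕ → ℕ} :
    ∀ {L : ℕ}, (∀ i < L, z i < b) → ∑ i ∈ Finset.range L, z i * b ^ i < b ^ L
  | 0, _ => by simp
  | L + 1, hz => by
    have hlow := sum_range_mul_pow_lt (L := L) fun i hi => hz i (by omega)
    calc ∑ i ∈ Finset.range (L + 1), z i * b ^ i
        < b ^ L + z L * b ^ L := by rw [Finset.sum_range_succ]; omega
      _ = (z L + 1) * b ^ L := by ring
      _ ≤ b * b ^ L := Nat.mul_le_mul_right _ (hz L L.lt_succ_self)
      _ = b ^ (L + 1) := by ring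

theorem sum_range_mul_pow_div_pow_mod {b j : ℕ} {z : ℕ → ℕ} :
    ∀ {L : ℕ}, (∀ i < L, z i < b) → j < L → (∑ i ∈ Finset.range L, z i * b ^ i) / b ^ j % b = z j
  | L + 1, hz, hj => by
    have hz' : ∀ i < L, z i < b := fun i hi => hz i (by omega)
    have hb : 0 < b := (Nat.zero_le _).trans_lt (hz L L.lt_succ_self)
    rw [Finset.sum_range_succ]
    rcases Nat.lt_succ_iff_lt_or_eq.1 hj with hj | rfl
    · obtain ⟨k, rfl⟩ := Nat.exists_eq_add_of_lt hj
      have : z (j + k + 1) * b ^ (j + k + 1) = z (j + k + 1) * b ^ k * b * b ^ j := by ring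
      rw [this, Nat.add_mul_div_right _ _ (pow_pos hb j), Nat.add_mul_mod_self_right,
        sum_range_mul_pow_div_pow_mod (L := j + k + 1) hz' hj]
    · rw [Nat.add_mul_div_right _ _ (pow_pos hb j), Nat.div_eq_of_lt (sum_range_mul_pow_lt hz'),
        zero_add, Nat.mod_eq_of_lt (hz j hj)]

section Slalom

variable {h : ℕ → ℕ} {L : ℕ}

theorem exists_digit_getD_bitList_mem_IOE (hh : Computable h) {s : ℕ → ℕ}
    (hs : s ∈ probDSlalom (fun n => h n ^ L) L) :
    ∃ j < L, (fun n => (bitList (s n)).getD j 0 / h n ^ j % h n) ∈ IOE h := by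
  by_contra! hnot
  simp only [IOE, Set.mem_ofPred_eq, not_forall, not_frequently] at hnot
  choose! z hzc hzh hzf using hnot
  set y : ℕ → ℕ := fun n => ∑ j ∈ Finset.range L, z j n * h n ^ j
  have hyc : Computable y := computable_sum_range fun j hj =>
    Primrec.nat_mul.to_comp.comp (hzc j hj) (primrec_pow.to_comp.comp hh (Computable.const j))
  have hyh : ∀ n, y n < h n ^ L := fun n => sum_range_mul_pow_lt fun j hj => hzh j hj n
  have hdigit : ∀ n, ∀ j < L, y n / h n ^ j % h n = z j n := fun n j hj =>
    sum_range_mul_pow_div_pow_mod (fun i hi => hzh i hi n) hj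
  have hmiss : ∀ᶠ n in atTop, ∀ j < L, (bitList (s n)).getD j 0 / h n ^ j % h n ≠ z j n :=
    (Set.finite_lt_nat L).eventually_all.2 hzf
  obtain ⟨n, hyn, hn⟩ := ((hs.2 y hyc hyh).and_eventually hmiss).exists
  obtain ⟨j, hj, hjy⟩ := hs.1.exists_getD_bitList_eq hyn
  exact hn j hj (hjy ▸ hdigit n j hj)

theorem muchnikLE_IOE_probDSlalom (hh : Computable h) :
    MuchnikLE (IOE h) (probDSlalom (fun n => h n ^ L) L) := fun s hs =>
  let ⟨j, _, hj⟩ := exists_digit_getD_bitList_mem_IOE hh hs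
  ⟨_, hj, turingLE_of_computable₂ (F := fun n m => (bitList m).getD j 0 / h n ^ j % h n)
    (Primrec.nat_mod.to_comp.comp
      (Primrec.nat_div.to_comp.comp
        ((primrec_getD_bitList j).to_comp.comp Computable.snd)
        (primrec_pow.to_comp.comp (hh.comp Computable.fst) (Computable.const j)))
      (hh.comp Computable.fst)) s⟩

theorem AED_subset_probBSlalom {u : ℕ → ℕ} (hhu : ∀ n, h n ≤ u n) :
    AED h ⊆ probBSlalom u L := by
  refine fun y ⟨hyh, hy⟩ => ⟨fun n => (hyh n).trans_le (hhu n), fun s hs hsl => ?_⟩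
  have hmiss : ∀ᶠ n in atTop, ∀ j < L, y n ≠ (bitList (s n)).getD j 0 :=
    (Set.finite_lt_nat L).eventually_all.2 fun j _ =>
      hy _ ((primrec_getD_bitList j).to_comp.comp hs)
  filter_upwards [hmiss] with n hn
  rw [Bool.eq_false_iff]
  intro hbit
  obtain ⟨j, hj, hjy⟩ := hsl.exists_getD_bitList_eq hbit
  exact hn j hj hjy.symm

theorem zero_mem_probBSlalom_zero {u : ℕ → ℕ} (hu : ∀ n, 0 < u n) :
    (fun _ => 0) ∈ probBSlalom u 0 := by
  refine ⟨hu, fun s _ hsl => Eventually.of_forall fun n => ?_⟩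
  rw [Bool.eq_false_iff]
  intro hbit
  obtain ⟨j, hj, -⟩ := hsl.exists_getD_bitList_eq hbit
  exact Nat.not_lt_zero j hj

end Slalom

/-- For `L ∈ ℕ` and `u(n) = 2^(L·2^n)`:
`D⟨∌*, u, L⟩ ≥_W IOE(n ↦ 2^(2^n))` and `B⟨∌*, u, L⟩ ≤_S AED(n ↦ 2^(2^n))`. -/
theorem stmt13 (L : ℕ) :
    MuchnikLE (IOE fun n => 2 ^ 2 ^ n) (probDSlalom (fun n => 2 ^ (L * 2 ^ n)) L) ∧
      MedvedevLE (probBSlalom (fun n => 2 ^ (L * 2 ^ n)) L) (AED fun n => 2 ^ 2 ^ n) := by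
  have hu : (fun n => 2 ^ (L * 2 ^ n)) = fun n => (2 ^ 2 ^ n) ^ L :=
    funext fun n => by rw [← pow_mul, mul_comm]
  have hh : Computable fun n => 2 ^ 2 ^ n :=
    primrec_pow.to_comp.comp (Computable.const 2)
      (primrec_pow.to_comp.comp (Computable.const 2) Computable.id)
  refine ⟨hu ▸ muchnikLE_IOE_probDSlalom hh, ?_⟩
  rcases Nat.eq_zero_or_pos L with rfl | hL
  · exact medvedevLE_of_computable_mem (Computable.const 0)
      (zero_mem_probBSlalom_zero fun n => by positivity)
  · exact medvedevLE_of_subset (AED_subset_probBSlalom fun n =>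
      Nat.pow_le_pow_right two_pos (Nat.le_mul_of_pos_left _ hL))

end Paper
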